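/- (Fenn–Rourke) Let p : X → G be an augmented rack, and equip X with the rack structure x ◁ y := x·p(y). Then the induced map on the associated group gives a crossed module of groups As(X) → G: there exists a right action of G on As(X) by group automorphisms satisfying i(x)·g = i(x·g) for all x ∈ X, g ∈ G, such that the unique group homomorphism p̂ : As(X) → G with p̂ ∘ i = p is equivariant, p̂(a·g) = g⁻¹ p̂(a) g for all a ∈ As(X), g ∈ G, and satisfies the Peiffer identity a·p̂(b) = b⁻¹ a b for all a,b ∈ As(X). -/

import Mathlib

/-- A right rack. -/
class RightRack (R : Type*) where
  act : R → R → R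
  act_bij : ∀ y : R, Function.Bijective (fun x => act x y)
  self_distrib : ∀ x y z : R, act (act x y) z = act (act x z) (act y z)

/-- The relations `y⁻¹ x⁻¹ y (x ◁ y)` defining the associated group of a rack. -/
def rackRels (R : Type*) [RightRack R] : Set (FreeGroup R) :=
  {w | ∃ x y : R,
    w = (FreeGroup.of y)⁻¹ * (FreeGroup.of x)⁻¹ * FreeGroup.of y *
        FreeGroup.of (RightRack.act x y)}

/-- The associated group `As(R)` of a rack `R`. -/
def AsGroup (R : Type*) [RightRack R] : Type _ := PresentedGroup (rackRels R)

instance (R : Type*) [RightRack R] : Group (AsGroup R) :=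
  inferInstanceAs (Group (PresentedGroup (rackRels R)))

/-- The canonical map `i : R → As(R)`. -/
def asOf {R : Type*} [RightRack R] (r : R) : AsGroup R :=
  PresentedGroup.of (rels := rackRels R) r

/-- An augmented rack over a group `G`. -/
structure AugRack (X G : Type*) [Group G] where
  smul : X → G → X
  smul_one : ∀ x : X, smul x 1 = x
  smul_mul : ∀ (x : X) (g h : G), smul (smul x g) h = smul x (g * h)
  p : X → G
  aug : ∀ (x : X) (g : G), p (smul x g) = g⁻¹ * p x * g

/-!
The action of `G` on `X` preserves the rack operation, `(x ◁ y) · g = (x · g) ◁ (y · g)`, and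
`p` turns `◁` into conjugation, so both `p` and `x ↦ i(x · g)` respect the defining relations
of `As(X)`; every identity is then an equality of homomorphisms out of `As(X)`, checked on
generators. For the Peiffer identity one compares two homomorphisms `As(X) → Aut(As(X))`:
`b ↦ (a ↦ a · p̂(b)⁻¹)` and conjugation by `b`. On a generator `i(y)` they agree because
`i(x · p(y)) = i(x ◁ y) = i(y)⁻¹ i(x) i(y)` is the defining relation of `As(X)`.
-/

namespace AsGroup

variable {R : Type*} [RightRack R]

theorem asOf_act (x y : R) :
    asOf (RightRack.act x y) = (asOf y)⁻¹ * asOf x * asOf y := by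
  have hrel : (asOf y)⁻¹ * (asOf x)⁻¹ * asOf y * asOf (RightRack.act x y) = 1 :=
    PresentedGroup.one_of_mem ⟨x, y, rfl⟩
  rw [eq_inv_of_mul_eq_one_right hrel]
  group

theorem asOf_eq_conj_of_act_eq {x y z : R} (h : RightRack.act z y = x) :
    asOf z = asOf y * asOf x * (asOf y)⁻¹ := by
  rw [← h, asOf_act]
  group

variable {H : Type*} [Group H]

def lift (f : R → H) (hf : ∀ x y, f (RightRack.act x y) = (f y)⁻¹ * f x * f y) :
    AsGroup R →* H :=
  PresentedGroup.toGroup (f := f) <| by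
    rintro r ⟨x, y, rfl⟩
    simp only [map_mul, map_inv, FreeGroup.lift_apply_of, hf]
    group

@[simp]
theorem lift_asOf (f : R → H) (hf : ∀ x y, f (RightRack.act x y) = (f y)⁻¹ * f x * f y)
    (x : R) : lift f hf (asOf x) = f x :=
  PresentedGroup.toGroup.of _

@[ext]
theorem hom_ext {φ ψ : AsGroup R →* H} (h : ∀ x, φ (asOf x) = ψ (asOf x)) : φ = ψ :=
  PresentedGroup.ext h

end AsGroup

namespace AugRack

open AsGroup

variable {X G : Type*} [Group G] [RightRack X] (A : AugRack X G)

theorem p_act (hrack : ∀ x y : X, RightRack.act x y = A.smul x (A.p y)) (x y : X) :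
    A.p (RightRack.act x y) = (A.p y)⁻¹ * A.p x * A.p y := by
  rw [hrack, A.aug]

theorem smul_act (hrack : ∀ x y : X, RightRack.act x y = A.smul x (A.p y)) (x y : X) (g : G) :
    A.smul (RightRack.act x y) g = RightRack.act (A.smul x g) (A.smul y g) := by
  rw [hrack, hrack, A.aug, A.smul_mul, A.smul_mul]
  group

variable (hrack : ∀ x y : X, RightRack.act x y = A.smul x (A.p y))

def phat : AsGroup X →* G :=
  lift A.p (A.p_act hrack)

def actHom (g : G) : AsGroup X →* AsGroup X :=
  lift (fun x => asOf (A.smul x g)) fun x y => by rw [A.smul_act hrack, asOf_act]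

@[simp]
theorem phat_asOf (x : X) : A.phat hrack (asOf x) = A.p x :=
  lift_asOf _ _ x

@[simp]
theorem actHom_asOf (g : G) (x : X) : A.actHom hrack g (asOf x) = asOf (A.smul x g) :=
  lift_asOf _ _ x

theorem actHom_one : A.actHom hrack 1 = MonoidHom.id _ := by
  ext x
  simp [A.smul_one]

theorem actHom_mul (g h : G) :
    A.actHom hrack (g * h) = (A.actHom hrack h).comp (A.actHom hrack g) := by
  ext x
  simp [A.smul_mul]

theorem phat_comp_actHom (g : G) :
    (A.phat hrack).comp (A.actHom hrack g) =
      (MulAut.conj g⁻¹).toMonoidHom.comp (A.phat hrack) := by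
  ext x
  simp [A.aug]

/-- `g` acts by `· g⁻¹`, which makes the action a homomorphism into `Aut(As(X))`. -/
def leftAct : G →* MulAut (AsGroup X) where
  toFun g := (A.actHom hrack g⁻¹).toMulEquiv (A.actHom hrack g)
    (by rw [← actHom_mul, inv_mul_cancel, actHom_one])
    (by rw [← actHom_mul, mul_inv_cancel, actHom_one])
  map_one' := by
    ext a
    simp [actHom_one]
  map_mul' g h := by
    ext a
    simp [actHom_mul]

theorem leftAct_apply (g : G) (a : AsGroup X) : A.leftAct hrack g a = A.actHom hrack g⁻¹ a :=
  rfl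

theorem leftAct_comp_phat : (A.leftAct hrack).comp (A.phat hrack) = MulAut.conj := by
  refine hom_ext fun y => MulEquiv.toMonoidHom_injective <| hom_ext fun x => ?_
  have hz : RightRack.act (A.smul x (A.p y)⁻¹) y = x := by
    rw [hrack, A.smul_mul, inv_mul_cancel, A.smul_one]
  simp [leftAct_apply, asOf_eq_conj_of_act_eq hz]

theorem actHom_phat (a b : AsGroup X) : A.actHom hrack (A.phat hrack b) a = b⁻¹ * a * b := by
  have h := DFunLike.congr_fun (DFunLike.congr_fun (A.leftAct_comp_phat hrack) b⁻¹) a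
  rwa [MonoidHom.comp_apply, leftAct_apply, map_inv, inv_inv, MulAut.conj_apply, inv_inv] at h

end AugRack

/-- Fenn–Rourke: for an augmented rack `p : X → G`, with `X` equipped
with the rack structure `x ◁ y := x · p(y)`, the induced map `p̂ : As(X) → G` together
with the induced right `G`-action on `As(X)` by group automorphisms is a crossed module
of groups: `p̂` is the unique group homomorphism with `p̂ ∘ i = p`, the action satisfies
`i(x) · g = i(x · g)`, `p̂` is equivariant, and the Peiffer identity holds. -/
theorem augRack_gives_group_crossed_module (X G : Type*) [Group G] [RightRack X]
    (A : AugRack X G)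
    (hrack : ∀ x y : X, RightRack.act x y = A.smul x (A.p y)) :
    ∃ (phat : AsGroup X →* G) (ρ : AsGroup X → G → AsGroup X),
      (∀ x : X, phat (asOf x) = A.p x) ∧
      (∀ ψ : AsGroup X →* G, (∀ x : X, ψ (asOf x) = A.p x) → ψ = phat) ∧
      (∀ a : AsGroup X, ρ a 1 = a) ∧
      (∀ (a : AsGroup X) (g h : G), ρ (ρ a g) h = ρ a (g * h)) ∧
      (∀ (a b : AsGroup X) (g : G), ρ (a * b) g = ρ a g * ρ b g) ∧
      (∀ (x : X) (g : G), ρ (asOf x) g = asOf (A.smul x g)) ∧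
      (∀ (a : AsGroup X) (g : G), phat (ρ a g) = g⁻¹ * phat a * g) ∧
      (∀ a b : AsGroup X, ρ a (phat b) = b⁻¹ * a * b) := by
  refine ⟨A.phat hrack, fun a g => A.actHom hrack g a, A.phat_asOf hrack, ?_, ?_, ?_,
    fun a b g => map_mul _ a b,
    fun x g => A.actHom_asOf hrack g x, ?_, A.actHom_phat hrack⟩
  · intro ψ hψ
    ext x
    simp [hψ]
  · intro a
    simp [A.actHom_one hrack]
  · intro a g h
    simp [A.actHom_mul hrack]
  · intro a g
    simpa using DFunLike.congr_fun (A.phat_comp_actHom hrack g) a
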